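/- arXiv:1708.09765 — 4 statements merged into one kernel-verified Lean document; each statement's English description precedes it below -/
import Mathlib

section
/- For every function h : ℕ × ℕ → ℕ there exists an infinite set D ⊆ ℕ such that either (a) there is M ∈ ℕ with h (x, y) ≤ M for all x < y in D, or (b) there is a function g : ℕ → ℕ tending to infinity with h (x, y) > g x for all x < y in D. -/
/-!
Take x₀ < x₁ < ⋯ as successive minima of a decreasing chain of infinite sets, shrinking at each
step so that on the rest of the chain `h (xⱼ, ·)` is either constant or larger than `xⱼ`; this gives
lower bounds `cⱼ ≤ h (xⱼ, xₖ)` for `j < k`, exact in the constant case. If one constant value is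
exact for infinitely many `j`, those `xⱼ` form a bounded set. Otherwise every value of `c` is
taken finitely often, so `c → ∞`, and `g := c ∘ r - 1`, with `r` a left inverse of `x` tending to ∞,
works on the `xⱼ` with `cⱼ > 0`.
-/

open Set Filter

theorem Set.Infinite.exists_infinite_subset_lowerBound {α : Type*} (f : α → ℕ) {S : Set α}
    (hS : S.Infinite) (b : ℕ) :
    ∃ T ⊆ S, T.Infinite ∧ ∃ c, (∀ y ∈ T, c ≤ f y) ∧ (b < c ∨ ∀ y ∈ T, f y = c) := by
  by_cases hfiber : ∃ v, (S ∩ f ⁻¹' {v}).Infinite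
  · obtain ⟨v, hv⟩ := hfiber
    exact ⟨_, inter_subset_left, hv, v, fun y hy => hy.2.ge, Or.inr fun y hy => hy.2⟩
  · simp only [not_exists, not_infinite] at hfiber
    have hsmall : (S ∩ f ⁻¹' Iic b).Finite :=
      ((finite_Iic b).biUnion fun v _ => hfiber v).subset fun y hy =>
        mem_biUnion (x := f y) hy.2 ⟨hy.1, rfl⟩
    refine ⟨S \ f ⁻¹' Iic b, sdiff_subset, ?_, b + 1, fun y hy => ?_, Or.inl b.lt_succ_self⟩
    · exact (hS.sdiff hsmall).mono fun y hy => ⟨hy.1, fun hb => hy.2 ⟨hy.1, hb⟩⟩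
    · simpa using hy.2

theorem exists_strictMono_of_forall_infinite {α : Type*} [Preorder α] [Infinite α]
    {P : α → Set α → Prop}
    (step : ∀ S : Set α, S.Infinite → ∃ a ∈ S, ∃ T ⊆ S, T.Infinite ∧ (∀ y ∈ T, a < y) ∧ P a T) :
    ∃ x : ℕ → α, StrictMono x ∧ ∀ j, ∃ T, P (x j) T ∧ ∀ k, j < k → x k ∈ T := by
  have : ∀ S : Set α, ∃ a T, S.Infinite →
      a ∈ S ∧ T ⊆ S ∧ T.Infinite ∧ (∀ y ∈ T, a < y) ∧ P a T := by
    intro S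
    by_cases hS : S.Infinite
    · obtain ⟨a, ha, T, hTS, hT⟩ := step S hS
      exact ⟨a, T, fun _ => ⟨ha, hTS, hT⟩⟩
    · exact ⟨Classical.arbitrary α, ∅, fun h => absurd h hS⟩
  choose a T hspec using this
  set S : ℕ → Set α := fun k => T^[k] univ with hS_def
  have hS_succ (k : ℕ) : S (k + 1) = T (S k) := Function.iterate_succ_apply' ..
  have hS : ∀ k, (S k).Infinite := by
    intro k
    induction k with
    | zero => exact infinite_univ
    | succ k ih => rw [hS_succ]; exact (hspec _ ih).2.2.1
  have hanti : Antitone S :=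
    antitone_nat_of_succ_le fun k => hS_succ k ▸ (hspec _ (hS k)).2.1
  have hmem (k : ℕ) : a (S k) ∈ S k := (hspec _ (hS k)).1
  refine ⟨fun k => a (S k), strictMono_nat_of_lt_succ fun k => ?_,
    fun j => ⟨T (S j), (hspec _ (hS j)).2.2.2.2, fun k hjk => ?_⟩⟩
  · exact (hspec _ (hS k)).2.2.2.1 _ (hS_succ k ▸ hmem (k + 1))
  · exact hS_succ j ▸ hanti hjk (hmem k)

theorem StrictMono.exists_tendsto_leftInverse {x : ℕ → ℕ} (hx : StrictMono x) :
    ∃ r : ℕ → ℕ, Tendsto r atTop atTop ∧ ∀ j, r (x j) = j := by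
  refine ⟨fun n => Nat.findGreatest (fun j => x j ≤ n) n,
    tendsto_atTop_atTop.2 fun b => ⟨x b, fun n hn => Nat.le_findGreatest (hx.le_apply.trans hn) hn⟩,
    fun j => le_antisymm ?_ (Nat.le_findGreatest hx.le_apply le_rfl)⟩
  exact hx.le_iff_le.1 (Nat.findGreatest_spec (P := fun i => x i ≤ x j) hx.le_apply le_rfl)

theorem exists_strictMono_lowerBound (h : ℕ × ℕ → ℕ) :
    ∃ x c : ℕ → ℕ, StrictMono x ∧ (∀ j k, j < k → c j ≤ h (x j, x k)) ∧
      ∀ j, x j < c j ∨ ∀ k, j < k → h (x j, x k) = c j := by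
  obtain ⟨x, hx, hP⟩ := exists_strictMono_of_forall_infinite
    (P := fun a T => ∃ c, (∀ y ∈ T, c ≤ h (a, y)) ∧ (a < c ∨ ∀ y ∈ T, h (a, y) = c))
    fun S hS => by
      obtain ⟨T, hTS, hT, hc⟩ :=
        (hS.sdiff (finite_Iic (sInf S))).exists_infinite_subset_lowerBound (fun y => h (sInf S, y)) (sInf S)
      exact ⟨sInf S, Nat.sInf_mem hS.nonempty, T, fun y hy => (hTS hy).1, hT,
        fun y hy => not_le.1 (hTS hy).2, hc⟩
  choose T hc hT using hP
  choose c hlow hcase using hc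
  exact ⟨x, c, hx, fun j k hjk => hlow j _ (hT j k hjk),
    fun j => (hcase j).imp_right fun heq k hjk => heq _ (hT j k hjk)⟩

/-- Ramsey-like dichotomy: for every `h : ℕ × ℕ → ℕ` there is an infinite
set `D ⊆ ℕ` on which `h` is either uniformly bounded on increasing pairs,
or dominates a function tending to infinity. -/
theorem ramsey_bounds (h : ℕ × ℕ → ℕ) :
    ∃ D : Set ℕ, D.Infinite ∧
      ((∃ M : ℕ, ∀ x ∈ D, ∀ y ∈ D, x < y → h (x, y) ≤ M) ∨
       (∃ g : ℕ → ℕ, Filter.Tendsto g Filter.atTop Filter.atTop ∧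
          ∀ x ∈ D, ∀ y ∈ D, x < y → h (x, y) > g x)) := by
  obtain ⟨x, c, hx, hlow, hcase⟩ := exists_strictMono_lowerBound h
  by_cases hconst : ∃ v, {j | ∀ k, j < k → h (x j, x k) = v}.Infinite
  · obtain ⟨v, hv⟩ := hconst
    refine ⟨x '' _, hv.image hx.injective.injOn, Or.inl ⟨v, ?_⟩⟩
    rintro _ ⟨j, hj, rfl⟩ _ ⟨k, -, rfl⟩ hjk
    exact (hj k (hx.lt_iff_lt.1 hjk)).le
  simp only [not_exists, not_infinite] at hconst
  have hc : Tendsto c atTop atTop := by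
    rw [← Nat.cofinite_eq_atTop]
    refine Tendsto.cofinite_of_finite_preimage_singleton fun v =>
      ((hconst v).union (finite_Iio v)).subset fun j hj => ?_
    rcases hcase j with hlt | heq
    · exact Or.inr (hx.le_apply.trans_lt (hlt.trans_eq hj))
    · exact Or.inl fun k hjk => (heq k hjk).trans hj
  have hpos : {j | 0 < c j}.Infinite :=
    Nat.frequently_atTop_iff_infinite.1 (hc.eventually_gt_atTop 0).frequently
  obtain ⟨r, hr, hrx⟩ := hx.exists_tendsto_leftInverse
  refine ⟨x '' {j | 0 < c j}, hpos.image hx.injective.injOn,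
    Or.inr ⟨fun n => c (r n) - 1, (tendsto_sub_atTop_nat 1).comp (hc.comp hr), ?_⟩⟩
  rintro _ ⟨j, hj, rfl⟩ _ ⟨k, -, rfl⟩ hjk
  calc c (r (x j)) - 1 = c j - 1 := by rw [hrx]
    _ < c j := Nat.sub_lt hj one_pos
    _ ≤ h (x j, x k) := hlow j k (hx.lt_iff_lt.1 hjk)
end

section
/- Let Σ be a finite alphabet (a Fintype) and let I be an infinite set of 'partial sequences', where a partial sequence is a function s : ℕ → Option Σ that is undefined (= none) only on finitely many positions. Say two partial sequences s, t 'meet' if there is a position i with s i = t i and s i ≠ none. Then there exists a partial sequence s ∈ I that meets infinitely many partial sequences from I. -/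
/-!
If every partial sequence in `I` met only finitely many others, then, `I` being infinite, one
could greedily pick `|A| + 1` members of `I` no two of which meet. But finitely many partial
sequences are all defined at some common position, where pairwise non-meeting sequences must
carry pairwise distinct letters — impossible with only `|A|` letters.
-/

variable {ι A : Type*}

def Meets (s t : ι → Option A) : Prop :=
  ∃ i, s i = t i ∧ s i ≠ none

instance : Std.Symm (Meets (ι := ι) (A := A)) where
  symm _ _ := fun ⟨i, hst, hs⟩ => ⟨i, hst.symm, hst ▸ hs⟩

theorem Set.Infinite.exists_finset_pairwise_not {α : Type*} {r : α → α → Prop} [Std.Symm r]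
    {S : Set α} (hS : S.Infinite) (hfin : ∀ x ∈ S, {y ∈ S | r x y}.Finite) (n : ℕ) :
    ∃ T : Finset α, ↑T ⊆ S ∧ T.card = n ∧ (T : Set α).Pairwise fun x y => ¬ r x y := by
  classical
  induction n with
  | zero => exact ⟨∅, by simp, rfl, by simp⟩
  | succ n ih =>
    obtain ⟨T, hTS, hcard, hpair⟩ := ih
    have hnbhd : (↑T ∪ ⋃ t ∈ T, {y ∈ S | r t y}).Finite :=
      T.finite_toSet.union (T.finite_toSet.biUnion fun t ht => hfin t (hTS ht))
    obtain ⟨s, hsS, hs⟩ := (hS.sdiff hnbhd).nonempty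
    simp only [Set.mem_union, Finset.mem_coe, Set.mem_iUnion, Set.mem_ofPred_eq, not_or,
      not_exists, not_and] at hs
    obtain ⟨hsT, hsr⟩ := hs
    refine ⟨insert s T, ?_, by rw [Finset.card_insert_of_notMem hsT, hcard], ?_⟩
    · rw [Finset.coe_insert]
      exact Set.insert_subset hsS hTS
    · rw [Finset.coe_insert]
      exact hpair.insert fun t ht _ =>
        ⟨fun hst => hsr t ht hsS (Std.Symm.symm _ _ hst), hsr t ht hsS⟩

theorem Finset.exists_forall_ne_none [Infinite ι] (T : Finset (ι → Option A))
    (hpart : ∀ t ∈ T, {i | t i = none}.Finite) : ∃ i, ∀ t ∈ T, t i ≠ none := by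
  obtain ⟨i, hi⟩ := (T.finite_toSet.biUnion hpart).infinite_compl.nonempty
  simp only [Set.mem_compl_iff, Set.mem_iUnion, Set.mem_ofPred_eq, not_exists] at hi
  exact ⟨i, hi⟩

theorem Finset.card_le_of_pairwise_not_meets [Infinite ι] [Fintype A] {T : Finset (ι → Option A)}
    (hpart : ∀ t ∈ T, {i | t i = none}.Finite)
    (hT : (T : Set (ι → Option A)).Pairwise fun s t => ¬ Meets s t) :
    T.card ≤ Fintype.card A := by
  classical
  obtain ⟨i, hi⟩ := T.exists_forall_ne_none hpart
  calc T.card ≤ (Finset.univ.erase (none : Option A)).card :=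
        Finset.card_le_card_of_injOn (fun t => t i)
          (fun t ht => by simpa using hi t ht)
          (fun s hs t ht hst => by_contra fun hne => hT hs ht hne ⟨i, hst, hi s hs⟩)
    _ = Fintype.card A := by simp [Finset.card_erase_of_mem]

/-- Among infinitely many partial sequences over a finite alphabet
(each undefined only at finitely many positions), some sequence
meets infinitely many of the others. -/
theorem exists_partial_sequence_meeting_infinitely_many
    (A : Type) [Fintype A] (I : Set (ℕ → Option A))
    (hpart : ∀ s ∈ I, {i : ℕ | s i = none}.Finite)
    (hI : I.Infinite) :
    ∃ s ∈ I, {t ∈ I | ∃ i : ℕ, s i = t i ∧ s i ≠ none}.Infinite := by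
  by_contra! hfin
  obtain ⟨T, hTI, hcard, hpair⟩ :=
    hI.exists_finset_pairwise_not (r := Meets) hfin (Fintype.card A + 1)
  have := Finset.card_le_of_pairwise_not_meets (fun t ht => hpart t (hTI ht)) hpair
  omega
end

section
/- Let φ : Set ℕ → Set ℕ → Prop be an edge relation and X a set. Call a finite set Y ⊆ ℕ an X-witness if for every two distinct x, y ∈ Y there exists Z with φ X Z and (x ∈ Z ↔ y ∉ Z). If X has more than 2^n successors (i.e., the set {Z : φ X Z} has more than 2^n elements), then there exists an X-witness of cardinality at least n. -/
/-! Call two points equivalent when no member of a family `𝒮` separates them. Every member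
of `𝒮` is a union of equivalence classes, so `𝒮` has at most `2 ^ k` members when there are
`k` classes. Hence more than `2 ^ n` members force at least `n` classes, and one
representative from each of `n` classes is a pairwise separated set. -/

open Cardinal

namespace Set

variable {α : Type*} (𝒮 : Set (Set α))

def separationSetoid : Setoid α where
  r x y := ∀ Z ∈ 𝒮, (x ∈ Z ↔ y ∈ Z)
  iseqv :=
    ⟨fun _ _ _ => Iff.rfl, fun h Z hZ => (h Z hZ).symm,
      fun h₁ h₂ Z hZ => (h₁ Z hZ).trans (h₂ Z hZ)⟩

theorem separationSetoid_rel {x y : α} :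
    (separationSetoid 𝒮).r x y ↔ ∀ Z ∈ 𝒮, (x ∈ Z ↔ y ∈ Z) :=
  Iff.rfl

theorem mk_le_two_pow_mk_quotient_separationSetoid :
    #𝒮 ≤ 2 ^ #(Quotient (separationSetoid 𝒮)) := by
  let classesIn (Z : 𝒮) : Set (Quotient (separationSetoid 𝒮)) :=
    {q | Quotient.lift (· ∈ (Z : Set α))
      (fun _ _ hxy => propext ((separationSetoid_rel 𝒮).mp hxy Z Z.2)) q}
  have classesIn_injective : Function.Injective classesIn := by
    intro Z₁ Z₂ h
    ext x
    exact Set.ext_iff.mp h (Quotient.mk _ x)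
  exact mk_set (α := Quotient _) ▸ mk_le_of_injective classesIn_injective

theorem exists_finset_card_eq_pairwise_separated {n : ℕ} (h : 2 ^ n < #𝒮) :
    ∃ Y : Finset α, Y.card = n ∧
      ∀ x ∈ Y, ∀ y ∈ Y, x ≠ y → ∃ Z ∈ 𝒮, (x ∈ Z ↔ y ∉ Z) := by
  have hn : (n : Cardinal) ≤ #(Quotient (separationSetoid 𝒮)) := by
    by_contra! hlt
    have := (mk_le_two_pow_mk_quotient_separationSetoid 𝒮).trans
      (power_le_power_left two_ne_zero hlt.le)
    exact (h.trans_le this).false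
  obtain ⟨e⟩ : Nonempty (Fin n ↪ Quotient (separationSetoid 𝒮)) :=
    lift_mk_le'.mp (by simpa using hn)
  refine ⟨Finset.univ.map (e.trans ⟨Quotient.out, Quotient.out_injective⟩), by simp, ?_⟩
  simp only [Finset.mem_map, Finset.mem_univ, true_and, Function.Embedding.trans_apply]
  rintro _ ⟨i, rfl⟩ _ ⟨j, rfl⟩ hne
  have not_rel : ¬(separationSetoid 𝒮).r (e i).out (e j).out := fun hrel =>
    hne (congrArg _ (Quotient.out_equiv_out.mp hrel))
  obtain ⟨Z, hZ, hxy⟩ := not_forall₂.mp ((separationSetoid_rel 𝒮).not.mp not_rel)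
  exact ⟨Z, hZ, iff_not_comm.mp (not_iff.mp hxy).symm⟩

end Set

/-- If `X` has more than `2^n` successors then there is an `X`-witness
of cardinality at least `n`. -/
theorem exists_large_witness (φ : Set ℕ → Set ℕ → Prop) (X : Set ℕ) (n : ℕ)
    (h : ∃ S : Finset (Set ℕ), (∀ Z ∈ S, φ X Z) ∧ 2 ^ n < S.card) :
    ∃ Y : Finset ℕ, n ≤ Y.card ∧
      ∀ x ∈ Y, ∀ y ∈ Y, x ≠ y → ∃ Z : Set ℕ, φ X Z ∧ (x ∈ Z ↔ y ∉ Z) := by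
  obtain ⟨S, hS, hcard⟩ := h
  have hsucc : 2 ^ n < #{Z | φ X Z} := calc
    (2 : Cardinal) ^ n < S.card := by exact_mod_cast hcard
    _ = #(S : Set (Set ℕ)) := mk_coe_finset.symm
    _ ≤ #{Z | φ X Z} := mk_le_mk_of_subset hS
  obtain ⟨Y, hY, hsep⟩ := Set.exists_finset_card_eq_pairwise_separated _ hsucc
  exact ⟨Y, hY.ge, hsep⟩
end

section
/- Let C be a finite set of coordinates, and for all naturals x < y let E x y be a finite nonempty set of vectors in ℕ^C. Then there exist a family Θ of subsets of C, an infinite set D ⊆ ℕ, a bounded function f : ℕ → ℕ, and a function g : ℕ → ℕ tending to infinity, such that for all x < y in D: (1) for every v ∈ E x y there is σ ∈ Θ with v α ≤ f x for all α ∈ σ; and (2) for every σ ∈ Θ there is v ∈ E x y with v α ≤ f x for all α ∈ σ and v β > g x for all β ∈ C \ σ. -/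
/-!
Fix a nonprincipal ultrafilter `U` on `ℕ` and work with the ultrafilter `U ⊗ U` on pairs `(x, y)`.
Call a pattern `σ ⊆ C` realized at level `l` if, for every `H`, `U ⊗ U`-almost every `E x y`
contains a vector `≤ l` on `σ` and `> H` off `σ`. If `σ` is not realized at level `l`, some bound
`b l` witnesses this, and we iterate `l ↦ max l (b l)` from `0` to get levels `a 0 ≤ a 1 ≤ ⋯`.
Given `v ∈ E x y`, the sets `{α | v α ≤ a k}` increase in `k`, so one of the first `|C| + 1`
steps is not strict; the pattern at that step must be realized, for otherwise the escape bound
would put a new coordinate into the next set. Thus `A = a |C|` and the patterns realized at some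
level `a k`, `k ≤ |C|`, satisfy both conditions for almost every pair, for each `H`; a diagonal
extraction along `U` turns "almost every pair" into "every pair of an infinite set".
-/

open Filter Set

def Ultrafilter.tensor {α β : Type*} (U : Ultrafilter α) (V : Ultrafilter β) :
    Ultrafilter (α × β) :=
  U.bind fun x => V.map (Prod.mk x)

theorem Ultrafilter.eventually_tensor {α β : Type*} {U : Ultrafilter α} {V : Ultrafilter β}
    {P : α × β → Prop} : (∀ᶠ p in U.tensor V, P p) ↔ ∀ᶠ x in U, ∀ᶠ y in V, P (x, y) :=
  Iff.rfl

theorem exists_strictMono_forall_lt_of_eventually {F : Filter ℕ} [F.NeBot] (hF : F ≤ atTop)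
    {Q : ℕ → ℕ → ℕ → Prop} (hQ : ∀ H, ∀ᶠ x in F, ∀ᶠ y in F, Q H x y) :
    ∃ k d : ℕ → ℕ, StrictMono k ∧ StrictMono d ∧ ∀ i j, i < j → Q (k i) (d i) (d j) := by
  obtain ⟨f, -, hf⟩ := exists_seq_of_forall_finset_exists
    (fun p : ℕ × ℕ => ∀ᶠ y in F, Q p.1 p.2 y)
    (fun p q => p.1 < q.1 ∧ p.2 < q.2 ∧ Q p.1 p.2 q.2)
    fun s hs => by
      set H := s.sup Prod.fst + 1
      have : ∀ᶠ y in F, (∀ᶠ z in F, Q H y z) ∧ ∀ p ∈ s, p.2 < y ∧ Q p.1 p.2 y :=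
        (hQ H).and <| (eventually_all_finset s).2 fun p hp =>
          (show ∀ᶠ y in F, p.2 < y from hF (eventually_gt_atTop p.2)).and (hs p hp)
      obtain ⟨y, hy, hys⟩ := this.exists
      exact ⟨(H, y), hy, fun p hp => ⟨Nat.lt_succ_of_le (s.le_sup hp), hys p hp⟩⟩
  exact ⟨fun n => (f n).1, fun n => (f n).2, fun m n h => (hf m n h).1,
    fun m n h => (hf m n h).2.1, fun i j h => (hf i j h).2.2⟩

theorem findGreatest_le_of_strictMono {d : ℕ → ℕ} (hd : StrictMono d) (i : ℕ) :
    Nat.findGreatest (fun j => d j ≤ d i) (d i) ≤ i :=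
  hd.le_iff_le.1 (Nat.findGreatest_spec (P := fun j => d j ≤ d i) (hd.id_le i) le_rfl)

theorem tendsto_findGreatest_of_strictMono {d : ℕ → ℕ} (hd : StrictMono d) :
    Tendsto (fun t => Nat.findGreatest (fun j => d j ≤ t) t) atTop atTop :=
  tendsto_atTop_atTop.2 fun b => ⟨d b, fun _ ht => Nat.le_findGreatest ((hd.id_le b).trans ht) ht⟩

theorem exists_le_card_not_ssubset_succ {C : Type*} [Finite C] (s : ℕ → Set C) :
    ∃ k ≤ Nat.card C, ¬ s k ⊂ s (k + 1) := by
  by_contra! h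
  have hcard : ∀ k ≤ Nat.card C + 1, k ≤ (s k).ncard := by
    intro k hk
    induction k with
    | zero => exact Nat.zero_le _
    | succ k ih => exact (ih (by omega)).trans_lt (ncard_lt_ncard (h k (by omega)))
  have := (hcard _ le_rfl).trans (ncard_le_card _)
  omega

section Patterns

variable {ι C : Type*} (W : Ultrafilter ι) (E : ι → Set (C → ℕ))

def IsRealizedAt (l : ℕ) (σ : Set C) : Prop :=
  ∀ H, ∀ᶠ i in W, ∃ w ∈ E i, (∀ α ∈ σ, w α ≤ l) ∧ ∀ β ∉ σ, H < w β

theorem exists_escape_bound [Finite C] (l : ℕ) :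
    ∃ b, ∀ σ : Set C, ¬ IsRealizedAt W E l σ →
      ∀ᶠ i in W, ∀ w ∈ E i, (∀ α ∈ σ, w α ≤ l) → ∃ β ∉ σ, w β ≤ b := by
  have (σ : Set C) : ∃ b, ¬ IsRealizedAt W E l σ →
      ∀ᶠ i in W, ∀ w ∈ E i, (∀ α ∈ σ, w α ≤ l) → ∃ β ∉ σ, w β ≤ b := by
    by_cases h : IsRealizedAt W E l σ
    · exact ⟨0, absurd h⟩
    · obtain ⟨H, hH⟩ := not_forall.1 h
      refine ⟨H, fun _ => (Ultrafilter.eventually_not.2 hH).mono fun i hi w hw hσ => ?_⟩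
      by_contra! hlarge
      exact hi ⟨w, hw, hσ, hlarge⟩
  choose b hb using this
  obtain ⟨B, hB⟩ := Finite.exists_le b
  exact ⟨B, fun σ hσ => (hb σ hσ).mono fun i hi w hw hle =>
    (hi w hw hle).imp fun β ⟨hβ, hwβ⟩ => ⟨hβ, hwβ.trans (hB σ)⟩⟩

theorem exists_bound_patterns [Finite C] :
    ∃ (A : ℕ) (Θ : Set (Set C)), ∀ H, ∀ᶠ i in W,
      (∀ v ∈ E i, ∃ σ ∈ Θ, ∀ α ∈ σ, v α ≤ A) ∧
      ∀ σ ∈ Θ, ∃ w ∈ E i, (∀ α ∈ σ, w α ≤ A) ∧ ∀ β ∉ σ, H < w β := by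
  choose b hb using exists_escape_bound W E
  set a : ℕ → ℕ := fun k => (fun l => max l (b l))^[k] 0
  have ha_succ (k : ℕ) : a (k + 1) = max (a k) (b (a k)) := Function.iterate_succ_apply' ..
  have ha : Monotone a := monotone_nat_of_le_succ fun k => (ha_succ k).symm ▸ le_max_left ..
  set n := Nat.card C
  refine ⟨a n, {σ | ∃ k ≤ n, IsRealizedAt W E (a k) σ}, fun H => ?_⟩
  have hreal : ∀ᶠ i in W, ∀ k ∈ Iic n, ∀ σ, IsRealizedAt W E (a k) σ →
      ∃ w ∈ E i, (∀ α ∈ σ, w α ≤ a k) ∧ ∀ β ∉ σ, H < w β :=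
    (eventually_all_finite (finite_Iic n)).2 fun k _ =>
      eventually_all.2 fun σ => eventually_imp_distrib_left.2 fun h => h H
  have hesc : ∀ᶠ i in W, ∀ k ∈ Iic n, ∀ σ, ¬ IsRealizedAt W E (a k) σ →
      ∀ w ∈ E i, (∀ α ∈ σ, w α ≤ a k) → ∃ β ∉ σ, w β ≤ a (k + 1) :=
    (eventually_all_finite (finite_Iic n)).2 fun k _ =>
      eventually_all.2 fun σ => eventually_imp_distrib_left.2 fun h =>
        (hb _ σ h).mono fun i hi w hw hσ => (hi w hw hσ).imp fun β ⟨hβ, hwβ⟩ =>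
          ⟨hβ, hwβ.trans ((ha_succ k).symm ▸ le_max_right ..)⟩
  filter_upwards [hreal, hesc] with i hreal hesc
  refine ⟨fun v hv => ?_, ?_⟩
  · obtain ⟨k, hk, hstep⟩ := exists_le_card_not_ssubset_succ fun k => {α | v α ≤ a k}
    by_cases hr : IsRealizedAt W E (a k) {α | v α ≤ a k}
    · exact ⟨_, ⟨k, hk, hr⟩, fun α hα => hα.trans (ha hk)⟩
    · obtain ⟨β, hβ, hvβ⟩ := hesc k hk _ hr v hv fun α hα => hα
      exact absurd ((ssubset_iff_of_subset fun α hα => hα.trans (ha k.le_succ)).2 ⟨β, hvβ, hβ⟩)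
        hstep
  · rintro σ ⟨k, hk, hr⟩
    obtain ⟨w, hw, hsmall, hlarge⟩ := hreal k hk σ hr
    exact ⟨w, hw, fun α hα => (hsmall α hα).trans (ha hk), hlarge⟩

end Patterns

theorem ramsey_vectors_general (C : Type) [Fintype C]
    (E : ℕ → ℕ → Finset (C → ℕ)) :
    ∃ (Θ : Set (Set C)) (D : Set ℕ) (f g : ℕ → ℕ),
      D.Infinite ∧
      (∃ M : ℕ, ∀ i, f i ≤ M) ∧
      Filter.Tendsto g Filter.atTop Filter.atTop ∧
      ∀ x ∈ D, ∀ y ∈ D, x < y →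
        ((∀ v ∈ E x y, ∃ σ ∈ Θ, ∀ α ∈ σ, v α ≤ f x) ∧
         (∀ σ ∈ Θ, ∃ v ∈ E x y,
            (∀ α ∈ σ, v α ≤ f x) ∧ (∀ β : C, β ∉ σ → v β > g x))) := by
  let U := Ultrafilter.of (atTop : Filter ℕ)
  obtain ⟨A, Θ, hΘ⟩ := exists_bound_patterns (U.tensor U) fun p => (E p.1 p.2 : Set (C → ℕ))
  obtain ⟨k, d, hk, hd, hkd⟩ :=
    exists_strictMono_forall_lt_of_eventually (Ultrafilter.of_le atTop)
      fun H => Ultrafilter.eventually_tensor.1 (hΘ H)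
  refine ⟨Θ, range d, fun _ => A, fun t => Nat.findGreatest (fun j => d j ≤ t) t,
    infinite_range_of_injective hd.injective, ⟨A, fun _ => le_rfl⟩,
    tendsto_findGreatest_of_strictMono hd, ?_⟩
  rintro _ ⟨i, rfl⟩ _ ⟨j, rfl⟩ hij
  obtain ⟨hcover, hwitness⟩ := hkd i j (hd.lt_iff_lt.1 hij)
  refine ⟨hcover, fun σ hσ => ?_⟩
  obtain ⟨w, hw, hsmall, hlarge⟩ := hwitness σ hσ
  exact ⟨w, hw, hsmall, fun β hβ =>
    ((findGreatest_le_of_strictMono hd i).trans (hk.id_le i)).trans_lt (hlarge β hβ)⟩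

/-- Ramsey-type lemma for sets of vectors (case T = S). -/
theorem ramsey_vectors (C : Type) [Fintype C]
    (E : ℕ → ℕ → Finset (C → ℕ))
    (hne : ∀ x y : ℕ, x < y → (E x y).Nonempty) :
    ∃ (Θ : Set (Set C)) (D : Set ℕ) (f g : ℕ → ℕ),
      D.Infinite ∧
      (∃ M : ℕ, ∀ i, f i ≤ M) ∧
      Filter.Tendsto g Filter.atTop Filter.atTop ∧
      ∀ x ∈ D, ∀ y ∈ D, x < y →
        ((∀ v ∈ E x y, ∃ σ ∈ Θ, ∀ α ∈ σ, v α ≤ f x) ∧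
         (∀ σ ∈ Θ, ∃ v ∈ E x y,
            (∀ α ∈ σ, v α ≤ f x) ∧ (∀ β : C, β ∉ σ → v β > g x))) :=
  ramsey_vectors_general C E
end
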